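/- Transport theorem: let p be a permutation of {1,…,k} and let [p] = {x Cayley permutation of length k : st(x) = p}. Then for every n ≥ 0, standardization is a bijection from the set of primitive modified ascent sequences of length n that avoid every pattern in [p] onto the set of permutations in Ω_n that avoid the classical pattern p. -/

import Mathlib

/-- A Cayley permutation of length `n`: a word whose set of values is `{1, …, k}`
for some `k ≤ n`. -/
def IsCayley {n : ℕ} (x : Fin n → ℕ) : Prop :=
  ∃ k, k ≤ n ∧ Set.range x = Set.Icc 1 k

/-- Ascent tops of `x`: indices `i` with `i = 0` or `x (i-1) < x i`. -/
def AscTops {n : ℕ} (x : Fin n → ℕ) : Set (Fin n) :=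
  {i | ∀ j : Fin n, (j : ℕ) + 1 = (i : ℕ) → x j < x i}

/-- Leftmost copies of `x`: indices `i` such that the value `x i` does not occur earlier. -/
def Nub {n : ℕ} (x : Fin n → ℕ) : Set (Fin n) :=
  {i | ∀ j : Fin n, j < i → x j ≠ x i}

/-- A modified ascent sequence: a Cayley permutation whose ascent tops
are exactly its leftmost copies. -/
def IsModasc {n : ℕ} (x : Fin n → ℕ) : Prop :=
  IsCayley x ∧ AscTops x = Nub x

/-- `x` has no flat steps (no two consecutive equal entries). -/
def NoFlat {n : ℕ} (x : Fin n → ℕ) : Prop :=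
  ∀ i j : Fin n, (j : ℕ) = (i : ℕ) + 1 → x i ≠ x j

/-- A primitive modified ascent sequence. -/
def IsPrim {n : ℕ} (x : Fin n → ℕ) : Prop :=
  IsModasc x ∧ NoFlat x

/-- The word `x` contains the pattern `y`. -/
def Contains {n k : ℕ} (x : Fin n → ℕ) (y : Fin k → ℕ) : Prop :=
  ∃ f : Fin k → Fin n, StrictMono f ∧ ∀ s t, y s < y t ↔ x (f s) < x (f t)

/-- The word `x` avoids the pattern `y`. -/
def Avoids {n k : ℕ} (x : Fin n → ℕ) (y : Fin k → ℕ) : Prop :=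
  ¬ Contains x y

/-- Standardization: `(Std x) i = #{j : x j < x i} + #{j ≤ i : x j = x i}`. -/
def Std {n : ℕ} (x : Fin n → ℕ) : Fin n → ℕ :=
  fun i => (Finset.univ.filter fun j => x j < x i).card +
    (Finset.univ.filter fun j => j ≤ i ∧ x j = x i).card

/-- `p` is a permutation of `{1, …, n}` (written as a word). -/
def IsPerm {n : ℕ} (p : Fin n → ℕ) : Prop :=
  Function.Injective p ∧ Set.range p = Set.Icc 1 n

/-- `p` contains the bivincular pattern `ω = (321, {1}, {1})`:
there are `i` and `j` with `i + 1 < j`, `p i > p (i+1)` and `p (i+1) = p j + 1`. -/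
def ContainsOmega {n : ℕ} (p : Fin n → ℕ) : Prop :=
  ∃ (i j : Fin n) (hi : (i : ℕ) + 1 < n),
    (i : ℕ) + 1 < (j : ℕ) ∧ p ⟨(i : ℕ) + 1, hi⟩ < p i ∧ p ⟨(i : ℕ) + 1, hi⟩ = p j + 1

/-- Membership in `Ω_n`: a permutation of `{1, …, n}` whose first entry is `1`
and which avoids the bivincular pattern `ω`. -/
def InOmega {n : ℕ} (p : Fin n → ℕ) : Prop :=
  IsPerm p ∧ (∀ h : 0 < n, p ⟨0, h⟩ = 1) ∧ ¬ ContainsOmega p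

/-! Standardization is inverted on primitive modified ascent sequences by counting ascent tops:
for such `x` the ascent tops of `x` and of `st(x)` are the leftmost copies of `x`, so `x i` is the
number of ascent tops `j` of `st(x)` with `st(x) j ≤ st(x) i` (`ascRank`). Conversely, for
`q ∈ Ω_n`, avoiding `ω` says that a value `v + 1` in descent-bottom position has `v` to its left;
so among positions whose values are not separated by an ascent top, positions increase with
values, which is exactly `st (ascRank q) = q`. Pattern avoidance transfers because an occurrence
of `p` in `st(x)` is an occurrence in `x` of a Cayley permutation standardizing to `p`. -/

open Finset

section Rank

variable {ι α : Type*} [LinearOrder α]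

def rankOn (s : Finset ι) (φ : ι → α) (i : ι) : ℕ := #{j ∈ s | φ j ≤ φ i}

variable {s : Finset ι} {φ : ι → α}

theorem filter_le_subset_filter_le {a b : ι} (h : φ a ≤ φ b) :
    ({j ∈ s | φ j ≤ φ a} : Finset ι) ⊆ {j ∈ s | φ j ≤ φ b} :=
  fun _ hj => mem_filter.2 ⟨(mem_filter.1 hj).1, (mem_filter.1 hj).2.trans h⟩

theorem rankOn_le_rankOn {a b : ι} (h : φ a ≤ φ b) : rankOn s φ a ≤ rankOn s φ b :=
  card_le_card (filter_le_subset_filter_le h)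

theorem rankOn_lt_rankOn_iff {a b : ι} (hb : b ∈ s) :
    rankOn s φ a < rankOn s φ b ↔ φ a < φ b := by
  refine ⟨fun h => lt_of_not_ge fun hba => h.not_ge (rankOn_le_rankOn hba), fun h => ?_⟩
  refine card_lt_card ((filter_le_subset_filter_le h.le).ssubset_of_not_subset
    fun hsub => ?_)
  exact h.not_ge (mem_filter.1 (hsub (mem_filter.2 ⟨hb, le_rfl⟩))).2

theorem rankOn_injOn (hφ : Set.InjOn φ s) : Set.InjOn (rankOn s φ) s := by
  intro a ha b hb h
  refine hφ ha hb (le_antisymm (not_lt.1 fun hlt => ?_) (not_lt.1 fun hlt => ?_))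
  · have := (rankOn_lt_rankOn_iff ha).2 hlt
    omega
  · have := (rankOn_lt_rankOn_iff hb).2 hlt
    omega

theorem range_rankOn (hφ : Set.InjOn φ s) (hmin : ∀ i, ∃ j ∈ s, φ j ≤ φ i) :
    Set.range (rankOn s φ) = Set.Icc 1 #s := by
  have hmem : ∀ i, rankOn s φ i ∈ Set.Icc 1 #s := fun i =>
    let ⟨j, hj, hji⟩ := hmin i
    ⟨card_pos.2 ⟨j, mem_filter.2 ⟨hj, hji⟩⟩, card_filter_le _ _⟩
  refine subset_antisymm (Set.range_subset_iff.2 hmem) fun r hr => ?_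
  have hsurj := surjOn_of_injOn_of_card_le (t := Icc 1 #s) (rankOn s φ)
    (fun i _ => by simpa using hmem i) (rankOn_injOn hφ) (by simp)
  obtain ⟨i, -, hi⟩ := hsurj (by simpa using hr)
  exact ⟨i, hi⟩

end Rank

theorem isCayley_rankOn {n : ℕ} {s : Finset (Fin n)} {x : Fin n → ℕ} (hx : Set.InjOn x s)
    (hmin : ∀ i, ∃ j ∈ s, x j ≤ x i) : IsCayley (rankOn s x) :=
  ⟨#s, (card_le_univ s).trans_eq (Fintype.card_fin n), range_rankOn hx hmin⟩

section Nub

variable {n : ℕ}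

theorem exists_mem_nub_eq (x : Fin n → ℕ) (i : Fin n) : ∃ j ∈ Nub x, x j = x i := by
  obtain ⟨j, hj, hmin⟩ := WellFounded.has_min wellFounded_lt {t | x t = x i} ⟨i, rfl⟩
  exact ⟨j, fun t hlt hxt => hmin t (hxt.trans hj) hlt, hj⟩

theorem nub_injOn (x : Fin n → ℕ) : Set.InjOn x (Nub x) := by
  intro a ha b hb hab
  rcases lt_trichotomy a b with h | h | h
  · exact absurd hab (hb a h)
  · exact h
  · exact absurd hab.symm (ha b h)

open Classical in
theorem IsCayley.rankOn_nub {x : Fin n → ℕ} (hx : IsCayley x) :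
    rankOn {j | j ∈ Nub x} x = x := by
  obtain ⟨k, -, hk⟩ := hx
  have hval : ∀ j, x j ∈ Set.Icc 1 k := fun j => hk ▸ Set.mem_range_self j
  funext i
  have himage : ({j ∈ {j | j ∈ Nub x} | x j ≤ x i} : Finset (Fin n)).image x = Icc 1 (x i) := by
    ext v
    simp only [mem_image, mem_filter, mem_univ, true_and, Finset.mem_Icc]
    constructor
    · rintro ⟨j, ⟨-, hji⟩, rfl⟩
      exact ⟨(hval j).1, hji⟩
    · rintro ⟨hv1, hvi⟩
      obtain ⟨t, rfl⟩ : v ∈ Set.range x := hk ▸ ⟨hv1, hvi.trans (hval i).2⟩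
      obtain ⟨j, hj, hjt⟩ := exists_mem_nub_eq x t
      exact ⟨j, ⟨hj, hjt ▸ hvi⟩, hjt⟩
  rw [rankOn, ← card_image_of_injOn ((nub_injOn x).mono fun j hj => by simp_all), himage,
    Nat.card_Icc, Nat.add_sub_cancel]

open Classical in
theorem exists_isCayley_lt_iff (y : Fin n → ℕ) :
    ∃ q, IsCayley q ∧ ∀ s t, q s < q t ↔ y s < y t := by
  have hnub : ∀ i, ∃ j ∈ ({j | j ∈ Nub y} : Finset (Fin n)), y j = y i := fun i => by
    simpa using exists_mem_nub_eq y i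
  refine ⟨rankOn {j | j ∈ Nub y} y,
    isCayley_rankOn (fun a ha b hb => nub_injOn y (by simpa using ha) (by simpa using hb))
      fun i => (hnub i).imp fun j hj => ⟨hj.1, hj.2.le⟩, fun s t => ?_⟩
  obtain ⟨t', ht', hyt⟩ := hnub t
  have hrank : rankOn {j | j ∈ Nub y} y t = rankOn {j | j ∈ Nub y} y t' := by
    simp only [rankOn, hyt]
  rw [hrank, rankOn_lt_rankOn_iff ht', hyt]

end Nub

theorem IsPerm.mem_Icc {n : ℕ} {p : Fin n → ℕ} (hp : IsPerm p) (i : Fin n) :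
    p i ∈ Set.Icc 1 n :=
  hp.2 ▸ Set.mem_range_self i

theorem IsPerm.exists_eq {n : ℕ} {p : Fin n → ℕ} (hp : IsPerm p) {v : ℕ}
    (hv : v ∈ Set.Icc 1 n) : ∃ i, p i = v := by
  rwa [← hp.2] at hv

theorem IsPerm.rankOn_univ {n : ℕ} {p : Fin n → ℕ} (hp : IsPerm p) : rankOn univ p = p := by
  classical
  have hnub : ({j | j ∈ Nub p} : Finset (Fin n)) = univ :=
    eq_univ_of_forall fun j => mem_filter.2 ⟨mem_univ j, fun t ht h => ht.ne (hp.1 h)⟩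
  rw [← hnub]
  exact IsCayley.rankOn_nub ⟨n, le_rfl, hp.2⟩

theorem IsPerm.eq_of_lt_iff {n : ℕ} {p q : Fin n → ℕ} (hp : IsPerm p) (hq : IsPerm q)
    (h : ∀ s t, p s < p t ↔ q s < q t) : p = q := by
  rw [← hp.rankOn_univ, ← hq.rankOn_univ]
  funext i
  simp only [rankOn, ← not_lt, h]

section Std

variable {n : ℕ}

theorem std_eq_rankOn (x : Fin n → ℕ) : Std x = rankOn univ fun i => toLex (x i, i) := by
  funext i
  rw [Std, rankOn, ← card_union_of_disjoint (disjoint_filter.2 fun j _ h1 h2 => h1.ne h2.2)]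
  congr 1
  ext j
  simp [Prod.Lex.toLex_le_toLex, and_comm]

theorem std_lt_std_iff (x : Fin n → ℕ) (a b : Fin n) :
    Std x a < Std x b ↔ x a < x b ∨ x a = x b ∧ a < b := by
  rw [std_eq_rankOn, rankOn_lt_rankOn_iff (mem_univ b), Prod.Lex.toLex_lt_toLex]

theorem isPerm_std (x : Fin n → ℕ) : IsPerm (Std x) := by
  have hinj : Set.InjOn (fun i => toLex (x i, i)) (univ : Finset (Fin n)) :=
    fun a _ b _ h => congrArg Prod.snd (toLex.injective h)
  refine ⟨?_, ?_⟩
  · rw [std_eq_rankOn]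
    exact fun a b h => rankOn_injOn hinj (mem_univ a) (mem_univ b) h
  · rw [std_eq_rankOn, range_rankOn hinj fun i => ⟨i, mem_univ i, le_rfl⟩, card_univ,
      Fintype.card_fin]

end Std

section Patterns

variable {n k : ℕ}

theorem std_lt_std_iff_of_lt_iff {x : Fin n → ℕ} {q : Fin k → ℕ} {f : Fin k → Fin n}
    (hf : StrictMono f) (hq : ∀ s t, q s < q t ↔ x (f s) < x (f t)) (s t : Fin k) :
    Std q s < Std q t ↔ Std x (f s) < Std x (f t) := by
  have heq : q s = q t ↔ x (f s) = x (f t) := by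
    have := hq s t
    have := hq t s
    omega
  rw [std_lt_std_iff, std_lt_std_iff, hq, heq, hf.lt_iff_lt]

theorem Contains.std {x : Fin n → ℕ} {q : Fin k → ℕ} (h : Contains x q) :
    Contains (Std x) (Std q) :=
  let ⟨f, hf, hq⟩ := h
  ⟨f, hf, std_lt_std_iff_of_lt_iff hf hq⟩

theorem exists_isCayley_of_contains_std {x : Fin n → ℕ} {p : Fin k → ℕ} (hp : IsPerm p)
    (h : Contains (Std x) p) : ∃ q, IsCayley q ∧ Std q = p ∧ Contains x q := by
  obtain ⟨f, hf, hpf⟩ := h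
  obtain ⟨q, hq, hqx⟩ := exists_isCayley_lt_iff fun s => x (f s)
  refine ⟨q, hq, (isPerm_std q).eq_of_lt_iff hp fun s t => ?_, f, hf, hqx⟩
  rw [std_lt_std_iff_of_lt_iff hf hqx, hpf]

theorem avoids_std_iff {x : Fin n → ℕ} {p : Fin k → ℕ} (hp : IsPerm p) :
    Avoids (Std x) p ↔ ∀ q, IsCayley q → Std q = p → Avoids x q := by
  refine ⟨fun h q _ hqp hxq => h (hqp ▸ hxq.std), fun h hxp => ?_⟩
  obtain ⟨q, hq, hqp, hxq⟩ := exists_isCayley_of_contains_std hp hxp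
  exact h q hq hqp hxq

end Patterns

section AscTops

variable {n : ℕ} {x : Fin n → ℕ}

theorem mem_ascTops_of_val_eq_zero {i : Fin n} (hi : (i : ℕ) = 0) : i ∈ AscTops x :=
  fun j hj => absurd hj (by omega)

theorem mem_ascTops_iff_of_succ_eq {i j : Fin n} (hji : (j : ℕ) + 1 = i) :
    i ∈ AscTops x ↔ x j < x i :=
  ⟨fun hi => hi j hji, fun hlt j' hj' => (Fin.ext (by omega) : j' = j) ▸ hlt⟩

theorem ascTops_std (hx : NoFlat x) : AscTops (Std x) = AscTops x := by
  ext i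
  refine forall_congr' fun j => imp_congr_right fun hji => ?_
  have hflat := hx j i hji.symm
  rw [std_lt_std_iff]
  exact ⟨fun h => h.resolve_right fun h' => hflat h'.1, Or.inl⟩

end AscTops

section Forward

variable {n : ℕ} {x : Fin n → ℕ}

theorem std_zero_eq_one (hx : Nub x ⊆ AscTops x) (hn : 0 < n) : Std x ⟨0, hn⟩ = 1 := by
  obtain ⟨i₀, -, hmin⟩ := univ.exists_min_image x ⟨⟨0, hn⟩, mem_univ _⟩
  obtain ⟨m, hm, hxm⟩ := exists_mem_nub_eq x i₀
  have hm0 : m = ⟨0, hn⟩ := by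
    by_contra hne
    have hpos : (m : ℕ) ≠ 0 := fun h => hne (Fin.ext h)
    have := (mem_ascTops_iff_of_succ_eq (j := ⟨m - 1, by omega⟩) (by simp; omega)).1 (hx hm)
    have := hmin ⟨m - 1, by omega⟩ (mem_univ _)
    omega
  subst hm0
  have hle : ∀ j, Std x ⟨0, hn⟩ ≤ Std x j := fun j => not_lt.1 fun h => by
    rcases (std_lt_std_iff x j _).1 h with h | ⟨-, h⟩
    · have := hmin j (mem_univ _)
      omega
    · exact absurd (Fin.lt_def.1 h) (Nat.not_lt_zero _)
  obtain ⟨j, hj⟩ := (isPerm_std x).exists_eq ⟨le_rfl, hn⟩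
  have := hle j
  have := ((isPerm_std x).mem_Icc ⟨0, hn⟩).1
  omega

theorem not_containsOmega_std (hx : Nub x ⊆ AscTops x) : ¬ ContainsOmega (Std x) := by
  rintro ⟨i, j, hi, hij, hdesc, hsucc⟩
  set i' : Fin n := ⟨i + 1, hi⟩
  have hii' : i < i' := Fin.lt_def.2 (Nat.lt_succ_self _)
  have hji' : i' < j := Fin.lt_def.2 hij
  have hxi : x i' < x i := ((std_lt_std_iff x i' i).1 hdesc).resolve_right fun h => h.2.not_gt hii'
  have hxj : x j < x i' := ((std_lt_std_iff x j i').1 (by omega)).resolve_right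
    fun h => h.2.not_gt hji'
  -- `j` is the lexicographic predecessor of `i'`: no room for an earlier copy of `x i'`
  have hnub : i' ∈ Nub x := fun t hti' hxt => by
    have h1 := (std_lt_std_iff x j t).2 (Or.inl (hxt ▸ hxj))
    have h2 := (std_lt_std_iff x t i').2 (Or.inr ⟨hxt, hti'⟩)
    omega
  exact lt_asymm hxi ((mem_ascTops_iff_of_succ_eq rfl).1 (hx hnub))

theorem inOmega_std (hx : Nub x ⊆ AscTops x) : InOmega (Std x) :=
  ⟨isPerm_std x, std_zero_eq_one hx, not_containsOmega_std hx⟩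

end Forward

open Classical in
noncomputable def ascRank {n : ℕ} (q : Fin n → ℕ) : Fin n → ℕ :=
  rankOn {j | j ∈ AscTops q} q

theorem ascRank_std {n : ℕ} {x : Fin n → ℕ} (hx : IsPrim x) : ascRank (Std x) = x := by
  classical
  funext i
  rw [ascRank, ascTops_std hx.2, hx.1.2, ← congrFun hx.1.1.rankOn_nub i]
  refine congrArg card (filter_congr fun j hj => ?_)
  replace hj : j ∈ Nub x := by simpa using hj
  rw [← not_lt, ← not_lt, std_lt_std_iff]
  exact not_congr (or_iff_left fun h : x i = x j ∧ i < j => hj i h.2 h.1)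

section Omega

variable {n : ℕ} {q : Fin n → ℕ}

theorem ascRank_le_ascRank {a b : Fin n} (h : q a ≤ q b) : ascRank q a ≤ ascRank q b :=
  rankOn_le_rankOn h

theorem ascRank_lt_ascRank_iff {a b : Fin n} (hb : b ∈ AscTops q) :
    ascRank q a < ascRank q b ↔ q a < q b :=
  rankOn_lt_rankOn_iff (by simpa using hb)

theorem ascRank_eq_of_not_mem_ascTops (hq : Function.Injective q) {t i : Fin n}
    (hi : i ∉ AscTops q) (hti : q t + 1 = q i) : ascRank q t = ascRank q i := by
  classical
  unfold ascRank rankOn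
  refine congrArg card (filter_congr fun j hj =>
    ⟨fun h : q j ≤ q t => h.trans (by omega), fun h : q j ≤ q i => ?_⟩)
  have hji : q j ≠ q i := fun e => hi (hq e ▸ by simpa using hj)
  omega

theorem lt_of_succ_eq_of_not_mem_ascTops (hq : Function.Injective q) (hω : ¬ ContainsOmega q)
    {a b : Fin n} (hb : b ∉ AscTops q) (hab : q b = q a + 1) : a < b := by
  obtain ⟨j, hjb, hbj⟩ : ∃ j : Fin n, (j : ℕ) + 1 = b ∧ q b ≤ q j := by simpa [AscTops] using hb
  have hj1 : (j : ℕ) + 1 < n := hjb ▸ b.2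
  have hb' : (⟨j + 1, hj1⟩ : Fin n) = b := Fin.ext hjb
  refine lt_of_not_ge fun hba => hω ⟨j, a, hj1, ?_, ?_, ?_⟩
  · have : b ≠ a := fun e => by subst e; omega
    have := Fin.lt_def.1 (lt_of_le_of_ne hba this)
    omega
  · rw [hb']
    exact lt_of_le_of_ne hbj fun e => by have := hq e; omega
  · rw [hb', hab]

theorem le_of_ascRank_eq (hq : IsPerm q) (hω : ¬ ContainsOmega q) {a b : Fin n}
    (hy : ascRank q a = ascRank q b) (hab : q a ≤ q b) : a ≤ b := by
  obtain ⟨d, hd⟩ := Nat.exists_eq_add_of_le hab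
  induction d generalizing b with
  | zero => exact (hq.1 (by omega : q a = q b)).le
  | succ d ih =>
    have hbn := (hq.mem_Icc b).2
    obtain ⟨c, hc⟩ := hq.exists_eq (v := q a + d) ⟨(hq.mem_Icc a).1.trans (by omega), by omega⟩
    have hyc : ascRank q c = ascRank q b :=
      le_antisymm (ascRank_le_ascRank (by omega)) (hy ▸ ascRank_le_ascRank (by omega))
    have hbA : b ∉ AscTops q := fun hbA => by
      have := (ascRank_lt_ascRank_iff hbA).2 (show q c < q b by omega)
      omega
    exact (ih (hy.trans hyc.symm) (by omega) hc).trans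
      (lt_of_succ_eq_of_not_mem_ascTops hq.1 hω hbA (by omega)).le

theorem std_ascRank (hq : InOmega q) : Std (ascRank q) = q := by
  refine (isPerm_std _).eq_of_lt_iff hq.1 fun s t => ?_
  have hblock : ∀ {a b}, ascRank q a = ascRank q b → q a ≤ q b → a ≤ b :=
    le_of_ascRank_eq hq.1 hq.2.2
  rw [std_lt_std_iff]
  constructor
  · rintro (h | ⟨h, hst⟩)
    · exact lt_of_not_ge fun hts => h.not_ge (ascRank_le_ascRank hts)
    · exact lt_of_le_of_ne (not_lt.1 fun hts => hst.not_ge (hblock h.symm hts.le))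
        (hq.1.1.ne hst.ne)
  · intro h
    rcases (ascRank_le_ascRank h.le).lt_or_eq with hlt | heq
    · exact Or.inl hlt
    · exact Or.inr ⟨heq, lt_of_le_of_ne (hblock heq h.le) fun e => h.ne (e ▸ rfl)⟩

theorem noFlat_ascRank (hq : InOmega q) : NoFlat (ascRank q) := by
  intro i j hji hy
  have hij : q i ≠ q j := hq.1.1.ne (Fin.ne_of_val_ne (by omega))
  rcases lt_or_gt_of_ne hij with h | h
  · have := (ascRank_lt_ascRank_iff ((mem_ascTops_iff_of_succ_eq hji.symm).2 h)).2 h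
    omega
  · have := Fin.le_def.1 (le_of_ascRank_eq hq.1 hq.2.2 hy.symm h.le)
    omega

theorem ascTops_ascRank (hq : InOmega q) : AscTops (ascRank q) = Nub (ascRank q) := by
  ext i
  constructor
  · intro hi t hti hyt
    have hpos : (i : ℕ) ≠ 0 := fun h => absurd (Fin.lt_def.1 hti) (by omega)
    have hj : ((⟨i - 1, by omega⟩ : Fin n) : ℕ) + 1 = i := by simp only; omega
    have hiA : i ∈ AscTops q := (mem_ascTops_iff_of_succ_eq hj).2 <| lt_of_not_ge fun h =>
      ((mem_ascTops_iff_of_succ_eq hj).1 hi).not_ge (ascRank_le_ascRank h)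
    rcases le_or_gt (q i) (q t) with h | h
    · exact absurd (le_of_ascRank_eq hq.1 hq.2.2 hyt.symm h) (not_le.2 hti)
    · exact ((ascRank_lt_ascRank_iff hiA).2 h).ne hyt
  · intro hi j hji
    refine lt_of_not_ge fun hle => ?_
    have hiA : i ∉ AscTops q := fun h =>
      ((ascRank_lt_ascRank_iff h).2 ((mem_ascTops_iff_of_succ_eq hji).1 h)).not_ge hle
    have hq1 : q i ≠ 1 := fun h1 => by
      have hi0 := hq.1.1 (h1.trans (hq.2.1 (Fin.pos i)).symm)
      exact hiA (mem_ascTops_of_val_eq_zero (congrArg Fin.val hi0))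
    obtain ⟨hqi1, hqin⟩ := hq.1.mem_Icc i
    obtain ⟨t, ht⟩ := hq.1.exists_eq (v := q i - 1) ⟨by omega, by omega⟩
    have hti := lt_of_succ_eq_of_not_mem_ascTops hq.1.1 hq.2.2 hiA (a := t) (by omega)
    exact hi t hti (ascRank_eq_of_not_mem_ascTops hq.1.1 hiA (by omega))

theorem isCayley_ascRank (hq : InOmega q) : IsCayley (ascRank q) := by
  classical
  refine isCayley_rankOn hq.1.1.injOn fun i => ⟨⟨0, Fin.pos i⟩, ?_, ?_⟩
  · simpa using mem_ascTops_of_val_eq_zero rfl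
  · rw [hq.2.1]
    exact (hq.1.mem_Icc i).1

theorem isPrim_ascRank (hq : InOmega q) : IsPrim (ascRank q) :=
  ⟨⟨isCayley_ascRank hq, ascTops_ascRank hq⟩, noFlat_ascRank hq⟩

end Omega

/-- Transport theorem: for a permutation `p` of `{1,…,k}`,
standardization is a bijection from the primitive modified ascent sequences of
length `n` avoiding every pattern in `[p] = {x Cayley : st(x) = p}` onto the
permutations in `Ω_n` avoiding the classical pattern `p`. -/
theorem transport {k : ℕ} (p : Fin k → ℕ) (hp : IsPerm p) (n : ℕ) :
    Set.BijOn (fun x => Std x)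
      {x : Fin n → ℕ | IsPrim x ∧
        ∀ q : Fin k → ℕ, IsCayley q → Std q = p → Avoids x q}
      {q : Fin n → ℕ | InOmega q ∧ Avoids q p} := by
  refine Set.InvOn.bijOn (f' := ascRank)
    ⟨fun x hx => ascRank_std hx.1, fun q hq => std_ascRank hq.1⟩
    (fun x hx => ⟨inOmega_std hx.1.1.2.symm.subset, (avoids_std_iff hp).2 hx.2⟩)
    fun q hq => ⟨isPrim_ascRank hq.1, (avoids_std_iff hp).1 ?_⟩
  rw [std_ascRank hq.1]
  exact hq.2
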